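/- Let M be a matroid on a finite set E with rank function r and let F_1, …, F_m ⊆ E. Suppose there exists at least one base B₀ of M with |B₀ ∩ F_i| = r(F_i) for all i ∈ {1,…,m}. Then for every B ⊆ E the following are equivalent: (a) B is a base of M with |B ∩ F_i| = r(F_i) for all i; (b) for every σ ⊆ {1,…,m}, the set B ∩ (F_σ⁻ ∖ F_σ⁺) is a basis of F_σ⁻ ∖ F_σ⁺ in the contraction M/F_σ⁺. -/

import Mathlib

/-!
Call `X` tight for an independent set `B` if `|B ∩ X| = r X`. By submodularity the tight sets
are closed under `∪` and `∩`, so a base tight on every `F i` is tight on every `F_σ⁺` and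
`F_σ⁻`, and hence meets each cell `F_σ⁻ \ F_σ⁺` in a basis of that cell in `M / F_σ⁺`.

Conversely, all bases of a cell in `M / F_σ⁺` have the same size, so `B` meets every cell, and
therefore `E` and every `F i` (disjoint unions of cells), in as many elements as `B₀` does.
`B` is independent because, listing the cells by increasing `|σ|`, all cells before `σ` lie in
`F_σ⁺`, and independence in `M / F_σ⁺` extends an independent subset of `F_σ⁺`.
-/

open Finset

/-- A (finite) matroid on a finite ground set `E`, given by a submodular rank function,
following the matroid rank axioms (R1)-(R3). -/
structure FinMatroid (α : Type*) [DecidableEq α] where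
  E : Finset α
  r : Finset α → ℕ
  r_le_card : ∀ ⦃A : Finset α⦄, A ⊆ E → r A ≤ A.card
  r_mono : ∀ ⦃A B : Finset α⦄, A ⊆ B → B ⊆ E → r A ≤ r B
  r_submod : ∀ ⦃A B : Finset α⦄, A ⊆ E → B ⊆ E → r (A ∪ B) + r (A ∩ B) ≤ r A + r B

namespace FinMatroid

variable {α : Type*} [DecidableEq α]

/-- A set is independent if it is a subset of the ground set whose rank is its cardinality. -/
def Indep (M : FinMatroid α) (A : Finset α) : Prop :=
  A ⊆ M.E ∧ M.r A = A.card

/-- A base is a maximal independent set. -/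
def Base (M : FinMatroid α) (B : Finset α) : Prop :=
  M.Indep B ∧ ∀ ⦃A : Finset α⦄, M.Indep A → B ⊆ A → A = B

/-- A basis of `A` is a maximal independent subset of `A`. -/
def BasisOf (M : FinMatroid α) (I A : Finset α) : Prop :=
  I ⊆ A ∧ M.Indep I ∧ ∀ ⦃J : Finset α⦄, J ⊆ A → M.Indep J → I ⊆ J → J = I

/-- A flat is a set `F` with `F = {s ∈ E : r (F ∪ {s}) = r F}`. -/
def Flat (M : FinMatroid α) (F : Finset α) : Prop :=
  F = M.E.filter (fun s => M.r (F ∪ {s}) = M.r F)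

/-- A matroid is loopless if every singleton of the ground set has rank one. -/
def Loopless (M : FinMatroid α) : Prop :=
  ∀ s ∈ M.E, M.r {s} = 1

/-- The restriction `M|A` of `M` to `A`. -/
def restrict (M : FinMatroid α) (A : Finset α) : FinMatroid α where
  E := A ∩ M.E
  r := M.r
  r_le_card := fun _ h => M.r_le_card (h.trans inter_subset_right)
  r_mono := fun _ _ h h' => M.r_mono h (h'.trans inter_subset_right)
  r_submod := fun _ _ h h' =>
    M.r_submod (h.trans inter_subset_right) (h'.trans inter_subset_right)

/-- The contraction `M/C` of `C` in `M`, with rank function `A ↦ r (A ∪ C) - r C`. -/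
def contract (M : FinMatroid α) (C : Finset α) : FinMatroid α where
  E := M.E \ C
  r := fun A => M.r (A ∪ C ∩ M.E) - M.r (C ∩ M.E)
  r_le_card := by
    intro A hA
    have hAE : A ⊆ M.E := hA.trans sdiff_subset
    have hc : C ∩ M.E ⊆ M.E := inter_subset_right
    have h1 := M.r_submod hAE hc
    have h2 := M.r_le_card hAE
    beta_reduce
    omega
  r_mono := by
    intro A B hAB hB
    have hBE : B ⊆ M.E := hB.trans sdiff_subset
    have hc : C ∩ M.E ⊆ M.E := inter_subset_right
    have h1 : M.r (A ∪ C ∩ M.E) ≤ M.r (B ∪ C ∩ M.E) :=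
      M.r_mono (union_subset_union hAB (Finset.Subset.refl _)) (union_subset hBE hc)
    beta_reduce
    omega
  r_submod := by
    intro A B hA hB
    have hAE : A ⊆ M.E := hA.trans sdiff_subset
    have hBE : B ⊆ M.E := hB.trans sdiff_subset
    have hc : C ∩ M.E ⊆ M.E := inter_subset_right
    have hAc : A ∪ C ∩ M.E ⊆ M.E := union_subset hAE hc
    have hBc : B ∪ C ∩ M.E ⊆ M.E := union_subset hBE hc
    have h1 := M.r_submod hAc hBc
    have e1 : (A ∪ C ∩ M.E) ∪ (B ∪ C ∩ M.E) = (A ∪ B) ∪ C ∩ M.E := by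
      ext x; simp only [Finset.mem_union, Finset.mem_inter]; tauto
    have e2 : (A ∪ C ∩ M.E) ∩ (B ∪ C ∩ M.E) = (A ∩ B) ∪ C ∩ M.E := by
      ext x; simp only [Finset.mem_union, Finset.mem_inter]; tauto
    rw [e1, e2] at h1
    have hABc : (A ∩ B) ∪ C ∩ M.E ⊆ M.E := union_subset (inter_subset_left.trans hAE) hc
    have hABc' : (A ∪ B) ∪ C ∩ M.E ⊆ M.E := union_subset (union_subset hAE hBE) hc
    have h2 : M.r (C ∩ M.E) ≤ M.r ((A ∩ B) ∪ C ∩ M.E) := M.r_mono subset_union_right hABc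
    have h3 : M.r (C ∩ M.E) ≤ M.r (A ∪ C ∩ M.E) := M.r_mono subset_union_right hAc
    have h4 : M.r (C ∩ M.E) ≤ M.r (B ∪ C ∩ M.E) := M.r_mono subset_union_right hBc
    have h5 : M.r (C ∩ M.E) ≤ M.r ((A ∪ B) ∪ C ∩ M.E) := M.r_mono subset_union_right hABc'
    beta_reduce
    omega

/-- `A` is a separator of `M` if `r A + r (E \ A) = r E`. -/
def Separator (M : FinMatroid α) (A : Finset α) : Prop :=
  A ⊆ M.E ∧ M.r A + M.r (M.E \ A) = M.r M.E

/-- `M` is connected (inseparable) if its ground set is nonempty and its only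
separators are `∅` and `E`. -/
def Connected (M : FinMatroid α) : Prop :=
  M.E.Nonempty ∧ ∀ A : Finset α, M.Separator A → A = ∅ ∨ A = M.E

/-- For connected `M`, a set `∅ ≠ F ⊊ E` is non-degenerate if both `M|F` and `M/F`
are connected. -/
def Nondegenerate (M : FinMatroid α) (F : Finset α) : Prop :=
  F ≠ ∅ ∧ F ⊂ M.E ∧ (M.restrict F).Connected ∧ (M.contract F).Connected

end FinMatroid

noncomputable section

open FinMatroid

/-- The indicator (incidence) vector `1^A ∈ ℝ^α` of a finite set `A`. -/
def indicatorVec {α : Type*} [DecidableEq α] (A : Finset α) : α → ℝ :=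
  fun i => if i ∈ A then 1 else 0

/-- The base polytope of a matroid: the convex hull of the indicator vectors of its bases. -/
def basePolytope {α : Type*} [DecidableEq α] (M : FinMatroid α) : Set (α → ℝ) :=
  convexHull ℝ {x | ∃ B : Finset α, M.Base B ∧ x = indicatorVec B}

/-- `Q` is a face of `P`: either `∅`, or `P` itself, or the subset of `P` where some
linear functional attains its maximum over `P` (an exposed face). -/
def IsFaceOf {α : Type*} (P Q : Set (α → ℝ)) : Prop :=
  Q = ∅ ∨ Q = P ∨ ∃ ℓ : (α → ℝ) →ₗ[ℝ] ℝ, Q = {x ∈ P | ∀ y ∈ P, ℓ y ≤ ℓ x}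

/-- The dimension of a convex set: the dimension of the direction of its affine span. -/
def sdim {α : Type*} (Q : Set (α → ℝ)) : ℕ :=
  Module.finrank ℝ (affineSpan ℝ Q).direction

end

/-- `F_σ⁺ := ⋃_{i ∈ σ} F i`. -/
def Fplus {α : Type*} [DecidableEq α] {m : ℕ} (F : Fin m → Finset α) (σ : Finset (Fin m)) :
    Finset α :=
  σ.sup F

/-- `F_σ⁻ := ⋂_{j ∉ σ} F j`, with the empty intersection equal to the ground set `E`. -/
def Fminus {α : Type*} [DecidableEq α] {m : ℕ} (M : FinMatroid α) (F : Fin m → Finset α)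
    (σ : Finset (Fin m)) : Finset α :=
  M.E.filter (fun x => ∀ j, j ∉ σ → x ∈ F j)

namespace FinMatroid

variable {α : Type*} [DecidableEq α] {M : FinMatroid α} {A B C I J X Y : Finset α} {x : α}

@[simp]
lemma r_empty (M : FinMatroid α) : M.r ∅ = 0 :=
  Nat.le_zero.mp ((M.r_le_card (empty_subset _)).trans_eq card_empty)

lemma indep_empty (M : FinMatroid α) : M.Indep ∅ :=
  ⟨empty_subset _, by simp⟩

lemma r_union_le_r_add_card (hA : A ⊆ M.E) (hB : B ⊆ M.E) :
    M.r (A ∪ B) ≤ M.r A + B.card := by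
  have := M.r_submod hA hB
  have := M.r_le_card hB
  omega

lemma r_insert_le_r_add_one (hA : A ⊆ M.E) (hx : x ∈ M.E) : M.r (insert x A) ≤ M.r A + 1 := by
  rw [insert_eq, union_comm]
  simpa using r_union_le_r_add_card hA (singleton_subset_iff.mpr hx)

lemma Indep.subset (hI : M.Indep I) (hJI : J ⊆ I) : M.Indep J := by
  have hJE : J ⊆ M.E := hJI.trans hI.1
  have hsplit : M.r I ≤ M.r J + (I \ J).card := by
    have := r_union_le_r_add_card hJE (sdiff_subset.trans hI.1 : I \ J ⊆ M.E)
    rwa [union_sdiff_of_subset hJI] at this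
  have := card_sdiff_of_subset hJI
  have := card_le_card hJI
  have := M.r_le_card hJE
  have := hI.2
  exact ⟨hJE, by omega⟩

lemma Indep.card_inter_le_r (hB : M.Indep B) (hX : X ⊆ M.E) : (B ∩ X).card ≤ M.r X :=
  (hB.subset inter_subset_left).2.symm.le.trans (M.r_mono inter_subset_right hX)

lemma Indep.card_inter_union_eq_r_and_card_inter_inter_eq_r (hB : M.Indep B) (hX : X ⊆ M.E)
    (hY : Y ⊆ M.E) (htX : (B ∩ X).card = M.r X) (htY : (B ∩ Y).card = M.r Y) :
    (B ∩ (X ∪ Y)).card = M.r (X ∪ Y) ∧ (B ∩ (X ∩ Y)).card = M.r (X ∩ Y) := by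
  have hcard : (B ∩ (X ∪ Y)).card + (B ∩ (X ∩ Y)).card = (B ∩ X).card + (B ∩ Y).card := by
    rw [inter_union_distrib_left, inter_inter_distrib_left]
    exact card_union_add_card_inter _ _
  have := M.r_submod hX hY
  have := hB.card_inter_le_r (union_subset hX hY)
  have := hB.card_inter_le_r (X := X ∩ Y) (inter_subset_left.trans hX)
  constructor <;> omega

lemma r_union_eq_of_forall_r_insert_eq (hA : A ⊆ M.E) (hY : Y ⊆ M.E)
    (hins : ∀ x ∈ Y, M.r (insert x A) = M.r A) : M.r (A ∪ Y) = M.r A := by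
  induction Y using Finset.induction_on with
  | empty => rw [union_empty]
  | @insert y Y _ ih =>
    have hYE : Y ⊆ M.E := (subset_insert _ _).trans hY
    have hAY : M.r (A ∪ Y) = M.r A := ih hYE fun x hx => hins x (mem_insert_of_mem hx)
    have hyA : M.r (insert y A) = M.r A := hins y (mem_insert_self _ _)
    have hunion : A ∪ insert y Y = (A ∪ Y) ∪ insert y A := by
      ext z; simp only [mem_union, mem_insert]; tauto
    have hsub := M.r_submod (union_subset hA hYE) (insert_subset (hY (mem_insert_self _ _)) hA)
    have hinter : M.r A ≤ M.r ((A ∪ Y) ∩ insert y A) :=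
      M.r_mono (subset_inter subset_union_left (subset_insert _ _))
        (inter_subset_left.trans (union_subset hA hYE))
    have hmono : M.r A ≤ M.r (A ∪ insert y Y) := M.r_mono subset_union_left (union_subset hA hY)
    rw [hunion] at hmono ⊢
    omega

lemma Indep.exists_insert_indep_of_r_lt (hI : M.Indep I) (hA : A ⊆ M.E) (hlt : M.r I < M.r A) :
    ∃ x ∈ A, x ∉ I ∧ M.Indep (insert x I) := by
  by_contra! hcon
  have hins : ∀ x ∈ A, M.r (insert x I) = M.r I := by
    intro x hx
    by_cases hxI : x ∈ I
    · rw [insert_eq_self.mpr hxI]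
    · have hxE : insert x I ⊆ M.E := insert_subset (hA hx) hI.1
      have := r_insert_le_r_add_one hI.1 (hA hx)
      have := M.r_mono (subset_insert x I) hxE
      by_contra hne
      exact hcon x hx hxI ⟨hxE, by rw [card_insert_of_notMem hxI, ← hI.2]; omega⟩
  have := r_union_eq_of_forall_r_insert_eq hI.1 hA hins
  have := M.r_mono subset_union_right (union_subset hI.1 hA)
  omega

lemma basisOf_iff (hA : A ⊆ M.E) :
    M.BasisOf I A ↔ I ⊆ A ∧ M.Indep I ∧ M.r I = M.r A := by
  constructor
  · rintro ⟨hIA, hI, hmax⟩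
    refine ⟨hIA, hI, (M.r_mono hIA hA).antisymm (not_lt.mp fun hlt => ?_)⟩
    obtain ⟨x, hxA, hxI, hxind⟩ := hI.exists_insert_indep_of_r_lt hA hlt
    exact hxI (hmax (insert_subset hxA hIA) hxind (subset_insert _ _) ▸ mem_insert_self x I)
  · rintro ⟨hIA, hI, hr⟩
    refine ⟨hIA, hI, fun J hJA hJ hIJ => (eq_of_subset_of_card_le hIJ ?_).symm⟩
    rw [← hJ.2, ← hI.2, hr]
    exact M.r_mono hJA hA

lemma BasisOf.card_eq_r (hIA : M.BasisOf I A) (hA : A ⊆ M.E) : I.card = M.r A := by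
  obtain ⟨-, hI, hr⟩ := (basisOf_iff hA).mp hIA
  rw [← hI.2, hr]

lemma base_iff_basisOf : M.Base B ↔ M.BasisOf B M.E :=
  ⟨fun ⟨hB, hmax⟩ => ⟨hB.1, hB, fun _ _ hJ hBJ => hmax hJ hBJ⟩,
    fun ⟨_, hB, hmax⟩ => ⟨hB, fun _ hJ hBJ => hmax hJ.1 hJ hBJ⟩⟩

lemma Base.card_eq_r (hB : M.Base B) : B.card = M.r M.E :=
  (base_iff_basisOf.mp hB).card_eq_r subset_rfl

lemma Indep.base_of_card_eq (hB : M.Indep B) (hcard : B.card = M.r M.E) : M.Base B :=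
  base_iff_basisOf.mpr <| (basisOf_iff subset_rfl).mpr ⟨hB.1, hB, hB.2.trans hcard⟩

@[simp]
lemma contract_E (M : FinMatroid α) (C : Finset α) : (M.contract C).E = M.E \ C := rfl

lemma contract_r (hC : C ⊆ M.E) (A : Finset α) :
    (M.contract C).r A = M.r (A ∪ C) - M.r C := by
  simp only [contract, inter_eq_left.mpr hC]

lemma contract_indep_iff (hC : C ⊆ M.E) :
    (M.contract C).Indep J ↔ J ⊆ M.E \ C ∧ M.r (J ∪ C) = J.card + M.r C := by
  rw [Indep, contract_r hC, contract_E]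
  refine and_congr_right fun hJ => ?_
  have := M.r_mono subset_union_right (union_subset (hJ.trans sdiff_subset) hC)
  omega

lemma Indep.union_of_contract_indep (hC : C ⊆ M.E) (hI : M.Indep I) (hIC : I ⊆ C)
    (hJ : (M.contract C).Indep J) : M.Indep (I ∪ J) := by
  obtain ⟨hJE, hJr⟩ := (contract_indep_iff hC).mp hJ
  have hIJE : I ∪ J ⊆ M.E := union_subset (hIC.trans hC) (hJE.trans sdiff_subset)
  have hdisj : Disjoint I J :=
    disjoint_left.mpr fun {_} hxI hxJ => (mem_sdiff.mp (hJE hxJ)).2 (hIC hxI)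
  have hcard : (I ∪ J).card = I.card + J.card := card_union_of_disjoint hdisj
  have hsub := M.r_submod hIJE hC
  rw [union_right_comm, union_eq_right.mpr hIC, union_comm C J] at hsub
  have := M.r_mono (subset_inter subset_union_left hIC) (inter_subset_left.trans hIJE)
  have := M.r_le_card hIJE
  have := hI.2
  exact ⟨hIJE, by omega⟩

lemma Indep.basisOf_contract_inter_sdiff (hB : M.Indep B) (hC : C ⊆ M.E) (hX : X ⊆ M.E)
    (htC : (B ∩ C).card = M.r C) (htXC : (B ∩ (X ∪ C)).card = M.r (X ∪ C)) :
    (M.contract C).BasisOf (B ∩ (X \ C)) (X \ C) := by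
  set I := B ∩ (X \ C)
  have hIE : I ⊆ M.E := inter_subset_right.trans (sdiff_subset.trans hX)
  have hdisj : Disjoint I (B ∩ C) :=
    disjoint_left.mpr fun {_} hxI hxC => (mem_sdiff.mp (mem_inter.mp hxI).2).2 (mem_inter.mp hxC).2
  have hsplit : B ∩ (X ∪ C) = I ∪ (B ∩ C) := by
    ext x; simp only [I, mem_inter, mem_union, mem_sdiff]; tauto
  have hcard : (I ∪ (B ∩ C)).card = I.card + (B ∩ C).card := card_union_of_disjoint hdisj
  have hup := r_union_le_r_add_card hC hIE
  have hlow : M.r (I ∪ (B ∩ C)) ≤ M.r (I ∪ C) :=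
    M.r_mono (union_subset_union_right inter_subset_right) (union_subset hIE hC)
  have hindep : M.Indep (I ∪ (B ∩ C)) :=
    hB.subset (union_subset inter_subset_left inter_subset_left)
  have := hindep.2
  have hmono : M.r (I ∪ C) ≤ M.r (X ∪ C) :=
    M.r_mono (union_subset_union_left (inter_subset_right.trans sdiff_subset)) (union_subset hX hC)
  rw [hsplit] at htXC
  rw [union_comm C I] at hup
  -- `|I| + r C = r (X ∪ C) ≥ r (I ∪ C) ≥ r (I ∪ (B ∩ C)) = |I| + r C`
  have hXE : X \ C ⊆ (M.contract C).E := sdiff_subset_sdiff hX subset_rfl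
  refine (basisOf_iff hXE).mpr ⟨inter_subset_right, (contract_indep_iff hC).mpr
    ⟨inter_subset_right.trans hXE, by omega⟩, ?_⟩
  rw [contract_r hC, contract_r hC, sdiff_union_self_eq_union]
  omega

end FinMatroid

section Cells

variable {α : Type*} [DecidableEq α] {m : ℕ} {M : FinMatroid α} {F : Fin m → Finset α}
  {B B' : Finset α} {σ τ : Finset (Fin m)} {x : α}

def cell (M : FinMatroid α) (F : Fin m → Finset α) (σ : Finset (Fin m)) : Finset α :=
  Fminus M F σ \ Fplus F σ

lemma mem_Fplus : x ∈ Fplus F σ ↔ ∃ i ∈ σ, x ∈ F i := mem_sup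

lemma Fplus_subset (hF : ∀ i, F i ⊆ M.E) (σ : Finset (Fin m)) : Fplus F σ ⊆ M.E :=
  Finset.sup_le fun i _ => hF i

lemma mem_cell : x ∈ cell M F σ ↔ x ∈ M.E ∧ univ.filter (fun i => x ∉ F i) = σ := by
  simp only [cell, Fminus, mem_sdiff, mem_filter, mem_Fplus, Finset.ext_iff, mem_univ, true_and]
  constructor
  · rintro ⟨⟨hxE, hmem⟩, hnot⟩
    exact ⟨hxE, fun i => ⟨fun hxi => by_contra fun hi => hxi (hmem i hi),
      fun hi hxi => hnot ⟨i, hi, hxi⟩⟩⟩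
  · rintro ⟨hxE, hσ⟩
    exact ⟨⟨hxE, fun j hj => by_contra fun hxj => hj ((hσ j).mp hxj)⟩,
      fun ⟨i, hi, hxi⟩ => (hσ i).mpr hi hxi⟩

lemma cell_subset : cell M F σ ⊆ M.E := fun _ hx => (mem_cell.mp hx).1

lemma cell_subset_contract_E : cell M F σ ⊆ (M.contract (Fplus F σ)).E :=
  sdiff_subset_sdiff (filter_subset _ _) subset_rfl

lemma disjoint_cell (hστ : σ ≠ τ) : Disjoint (cell M F σ) (cell M F τ) :=
  disjoint_left.mpr fun {_} hσ hτ => hστ ((mem_cell.mp hσ).2.symm.trans (mem_cell.mp hτ).2)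

lemma biUnion_cell_univ : univ.biUnion (cell M F) = M.E := by
  ext x
  simp only [mem_biUnion, mem_univ, true_and, mem_cell]
  exact ⟨fun ⟨_, hx, _⟩ => hx, fun hx => ⟨_, hx, rfl⟩⟩

lemma biUnion_cell_filter_notMem (hF : ∀ i, F i ⊆ M.E) (i : Fin m) :
    (univ.filter (fun σ => i ∉ σ)).biUnion (cell M F) = F i := by
  ext x
  simp only [mem_biUnion, mem_filter, mem_univ, true_and, mem_cell]
  constructor
  · rintro ⟨_, hi, -, rfl⟩
    simpa using hi
  · exact fun hx => ⟨_, by simpa using hx, hF i hx, rfl⟩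

lemma card_inter_biUnion_cell (B : Finset α) (S : Finset (Finset (Fin m))) :
    (B ∩ S.biUnion (cell M F)).card = ∑ σ ∈ S, (B ∩ cell M F σ).card := by
  rw [inter_biUnion]
  exact card_biUnion fun σ _ τ _ hστ =>
    (disjoint_cell hστ).mono inter_subset_right inter_subset_right

lemma card_inter_biUnion_cell_eq (h : ∀ σ, (B ∩ cell M F σ).card = (B' ∩ cell M F σ).card)
    (S : Finset (Finset (Fin m))) :
    (B ∩ S.biUnion (cell M F)).card = (B' ∩ S.biUnion (cell M F)).card := by
  simp only [card_inter_biUnion_cell, h]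

lemma cell_subset_Fplus (hστ : τ ≠ σ) (hcard : τ.card ≤ σ.card) : cell M F τ ⊆ Fplus F σ := by
  intro x hx
  by_contra hxσ
  obtain ⟨-, rfl⟩ := mem_cell.mp hx
  -- `x ∉ F_σ⁺` says `σ ⊆ {i | x ∉ F i} = τ`
  refine hστ (eq_of_subset_of_card_le (fun i hi => ?_) hcard).symm
  simp only [mem_filter, mem_univ, true_and]
  exact fun hxi => hxσ (mem_Fplus.mpr ⟨i, hi, hxi⟩)

end Cells

namespace FinMatroid

variable {α : Type*} [DecidableEq α] {m : ℕ} {M : FinMatroid α} {F : Fin m → Finset α}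
  {B : Finset α}

lemma Indep.card_inter_Fplus_eq_r (hF : ∀ i, F i ⊆ M.E) (hB : M.Indep B)
    (ht : ∀ i, (B ∩ F i).card = M.r (F i)) (σ : Finset (Fin m)) :
    (B ∩ Fplus F σ).card = M.r (Fplus F σ) := by
  induction σ using Finset.induction_on with
  | empty => simp [Fplus]
  | @insert i σ _ ih =>
    rw [Fplus, sup_insert, sup_eq_union]
    exact (hB.card_inter_union_eq_r_and_card_inter_inter_eq_r (hF i) (Fplus_subset hF σ)
      (ht i) ih).1

lemma Base.card_inter_filter_forall_mem_eq_r (hF : ∀ i, F i ⊆ M.E) (hB : M.Base B)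
    (ht : ∀ i, (B ∩ F i).card = M.r (F i)) (s : Finset (Fin m)) :
    (B ∩ M.E.filter (fun x => ∀ j ∈ s, x ∈ F j)).card
      = M.r (M.E.filter (fun x => ∀ j ∈ s, x ∈ F j)) := by
  induction s using Finset.induction_on with
  | empty => simpa [inter_eq_left.mpr hB.1.1] using hB.card_eq_r
  | @insert j s _ ih =>
    have hfilter : M.E.filter (fun x => ∀ k ∈ insert j s, x ∈ F k)
        = F j ∩ M.E.filter (fun x => ∀ k ∈ s, x ∈ F k) := by
      ext x
      simp only [mem_filter, mem_inter, forall_mem_insert]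
      constructor
      · rintro ⟨hxE, hxj, hxs⟩
        exact ⟨hxj, hxE, hxs⟩
      · rintro ⟨hxj, hxE, hxs⟩
        exact ⟨hxE, hxj, hxs⟩
    rw [hfilter]
    exact (hB.1.card_inter_union_eq_r_and_card_inter_inter_eq_r (hF j) (filter_subset _ _)
      (ht j) ih).2

lemma Base.card_inter_Fminus_eq_r (hF : ∀ i, F i ⊆ M.E) (hB : M.Base B)
    (ht : ∀ i, (B ∩ F i).card = M.r (F i)) (σ : Finset (Fin m)) :
    (B ∩ Fminus M F σ).card = M.r (Fminus M F σ) := by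
  have hFminus : Fminus M F σ = M.E.filter (fun x => ∀ j ∈ σᶜ, x ∈ F j) := by
    simp only [Fminus, mem_compl]
  rw [hFminus]
  exact hB.card_inter_filter_forall_mem_eq_r hF ht σᶜ

lemma Base.basisOf_contract_inter_cell (hF : ∀ i, F i ⊆ M.E) (hB : M.Base B)
    (ht : ∀ i, (B ∩ F i).card = M.r (F i)) (σ : Finset (Fin m)) :
    (M.contract (Fplus F σ)).BasisOf (B ∩ cell M F σ) (cell M F σ) := by
  have hplus := hB.1.card_inter_Fplus_eq_r hF ht σ
  have hminus := hB.card_inter_Fminus_eq_r hF ht σ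
  have hFminus : Fminus M F σ ⊆ M.E := filter_subset _ _
  exact hB.1.basisOf_contract_inter_sdiff (Fplus_subset hF σ) hFminus hplus
    (hB.1.card_inter_union_eq_r_and_card_inter_inter_eq_r hFminus (Fplus_subset hF σ)
      hminus hplus).1

lemma indep_inter_biUnion_cell (hF : ∀ i, F i ⊆ M.E)
    (hcells : ∀ σ, (M.contract (Fplus F σ)).Indep (B ∩ cell M F σ))
    (S : Finset (Finset (Fin m))) : M.Indep (B ∩ S.biUnion (cell M F)) := by
  induction S using Finset.strongInduction with
  | _ S ih =>
    rcases S.eq_empty_or_nonempty with rfl | hS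
    · simpa using indep_empty M
    obtain ⟨σ, hσS, hmax⟩ := S.exists_max_image card hS
    have hrest : B ∩ (S.erase σ).biUnion (cell M F) ⊆ Fplus F σ :=
      inter_subset_right.trans <| biUnion_subset.mpr fun τ hτ =>
        cell_subset_Fplus (ne_of_mem_erase hτ) (hmax τ (mem_of_mem_erase hτ))
    rw [← insert_erase hσS, biUnion_insert, inter_union_distrib_left, union_comm]
    exact (ih _ (erase_ssubset hσS)).union_of_contract_indep (Fplus_subset hF σ) hrest (hcells σ)

end FinMatroid

open FinMatroid

/-- If some base `B₀` satisfies `|B₀ ∩ F i| = r (F i)` for all `i`, then for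
every `B ⊆ E`: `B` is such a base iff for every `σ ⊆ [m]` the set `B ∩ (F_σ⁻ \ F_σ⁺)` is a
basis of `F_σ⁻ \ F_σ⁺` in `M / F_σ⁺`. -/
theorem statement6 {α : Type*} [DecidableEq α] {m : ℕ} (M : FinMatroid α)
    (F : Fin m → Finset α) (hF : ∀ i, F i ⊆ M.E)
    (hexists : ∃ B₀ : Finset α, M.Base B₀ ∧ ∀ i, (B₀ ∩ F i).card = M.r (F i))
    (B : Finset α) (hB : B ⊆ M.E) :
    (M.Base B ∧ ∀ i, (B ∩ F i).card = M.r (F i)) ↔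
      ∀ σ : Finset (Fin m),
        (M.contract (Fplus F σ)).BasisOf (B ∩ (Fminus M F σ \ Fplus F σ))
          (Fminus M F σ \ Fplus F σ) := by
  obtain ⟨B₀, hB₀, ht₀⟩ := hexists
  refine ⟨fun ⟨hBase, ht⟩ => hBase.basisOf_contract_inter_cell hF ht, fun hcells => ?_⟩
  have hcard : ∀ S : Finset (Finset (Fin m)),
      (B ∩ S.biUnion (cell M F)).card = (B₀ ∩ S.biUnion (cell M F)).card :=
    card_inter_biUnion_cell_eq fun σ =>
      ((hcells σ).card_eq_r cell_subset_contract_E).trans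
        ((hB₀.basisOf_contract_inter_cell hF ht₀ σ).card_eq_r cell_subset_contract_E).symm
  have hind : M.Indep B := by
    simpa [biUnion_cell_univ, inter_eq_left.mpr hB] using
      indep_inter_biUnion_cell hF (fun σ => (hcells σ).2.1) univ
  refine ⟨hind.base_of_card_eq ?_, fun i => ?_⟩
  · simpa [biUnion_cell_univ, inter_eq_left.mpr hB, inter_eq_left.mpr hB₀.1.1, hB₀.card_eq_r]
      using hcard univ
  · rw [← biUnion_cell_filter_notMem hF i, hcard, biUnion_cell_filter_notMem hF i, ht₀ i]
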